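/- arXiv:1504.05102 — 2 statements merged into one kernel-verified Lean document; each statement's English description precedes it below -/
import Mathlib

section
/- Let Γ = (V, E, s, r) be a finite directed graph with a specialization γ, and let W_i and W_j be minimal hereditary subsets of V. If there exist vertices v ∈ W_i and w ∈ W_j that are connected in the undirected graph (V, γ̃(V)), then W_i = W_j. -/
/-- `w` is a descendant of `v`: there is a (possibly empty) path from `v` to `w`. -/
def Descendant {V E : Type*} (s r : E → V) : V → V → Prop :=
  Relation.ReflTransGen fun a b => ∃ e, s e = a ∧ r e = b

/-- A nonempty subset `W ⊆ V` is hereditary if all descendants of its vertices lie in `W`. -/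
def Hereditary {V E : Type*} (s r : E → V) (W : Set V) : Prop :=
  W.Nonempty ∧ ∀ v ∈ W, ∀ w, Descendant s r v w → w ∈ W

/-- A minimal hereditary subset: hereditary and minimal under inclusion among
hereditary subsets. -/
def MinHereditary {V E : Type*} (s r : E → V) (W : Set V) : Prop :=
  Hereditary s r W ∧ ∀ U : Set V, Hereditary s r U → U ⊆ W → U = W

/-!
Since every vertex is the source of at most one special edge, following special edges is a
deterministic process, and two vertices joined by an undirected walk of special edges have a common
special descendant `z`. The set of descendants of `z` is hereditary, so by minimality it equals
every minimal hereditary subset containing `z`; both `Wᵢ` and `Wⱼ` contain `z`.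
-/

open Relation

theorem Relator.RightUnique.join_reflTransGen_of_reflTransGen_symmGen {α : Type*}
    {R : α → α → Prop} (hR : Relator.RightUnique R) {a b : α}
    (h : ReflTransGen (SymmGen R) a b) : Join (ReflTransGen R) a b :=
  have hequiv : Equivalence (Join (ReflTransGen R)) :=
    equivalence_join_reflTransGen fun _ _ c hab hac => ⟨c, hR hab hac ▸ .refl, .refl⟩
  reflTransGen_le_of_equivalence_of_le hequiv
    (fun _ _ hxy => hxy.elim (fun h => ⟨_, .single h, .refl⟩) fun h => ⟨_, .refl, .single h⟩)
    a b h

def SpecialStep {V E : Type*} (s r : E → V) (γ : {v : V // ∃ e, s e = v} → E) (a b : V) :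
    Prop :=
  ∃ e, (∃ u, γ u = e) ∧ s e = a ∧ r e = b

section Graph

variable {V E : Type*} {s r : E → V}

theorem rightUnique_specialStep {γ : {v : V // ∃ e, s e = v} → E}
    (hγ : ∀ v, s (γ v) = v.1) : Relator.RightUnique (SpecialStep s r γ) := by
  rintro a b c ⟨_, ⟨u, rfl⟩, hu, rfl⟩ ⟨_, ⟨u', rfl⟩, hu', rfl⟩
  obtain rfl : u = u' := Subtype.ext <| (hγ u).symm.trans <| hu.trans <| hu'.symm.trans (hγ u')
  rfl

theorem Descendant.of_reflTransGen_specialStep {γ : {v : V // ∃ e, s e = v} → E} {a b : V}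
    (h : ReflTransGen (SpecialStep s r γ) a b) : Descendant s r a b :=
  ReflTransGen.mono (fun _ _ ⟨e, _, he⟩ => ⟨e, he⟩) _ _ h

theorem hereditary_setOf_descendant (z : V) : Hereditary s r {u | Descendant s r z u} :=
  ⟨⟨z, .refl⟩, fun _ ha _ hb => ReflTransGen.trans ha hb⟩

theorem Hereditary.descendant_mem {W : Set V} (hW : Hereditary s r W) {v w : V} (hv : v ∈ W)
    (hvw : Descendant s r v w) : w ∈ W :=
  hW.2 v hv w hvw

theorem MinHereditary.setOf_descendant_eq {W : Set V} (hW : MinHereditary s r W) {z : V}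
    (hz : z ∈ W) : {u | Descendant s r z u} = W :=
  hW.2 _ (hereditary_setOf_descendant z) fun _ => hW.1.descendant_mem hz

theorem MinHereditary.eq_of_mem_of_mem {W W' : Set V} (hW : MinHereditary s r W)
    (hW' : MinHereditary s r W') {z : V} (hz : z ∈ W) (hz' : z ∈ W') : W = W' :=
  (hW.setOf_descendant_eq hz).symm.trans (hW'.setOf_descendant_eq hz')

end Graph

theorem minHereditary_eq_of_connected_general
    {V E : Type*}
    (s r : E → V)
    (γ : {v : V // ∃ e, s e = v} → E)
    (hγ : ∀ v, s (γ v) = v.1)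
    (Wi Wj : Set V) (hWi : MinHereditary s r Wi) (hWj : MinHereditary s r Wj)
    (v w : V) (hv : v ∈ Wi) (hw : w ∈ Wj)
    (hconn : Relation.ReflTransGen
      (fun a b => ∃ e, (∃ u, γ u = e) ∧ ((s e = a ∧ r e = b) ∨ (s e = b ∧ r e = a)))
      v w) :
    Wi = Wj := by
  have hsymm : ReflTransGen (SymmGen (SpecialStep s r γ)) v w :=
    ReflTransGen.mono (fun _ _ ⟨e, he, hab⟩ =>
      hab.elim (fun h => .of_rel ⟨e, he, h⟩) fun h => .of_rel_symm ⟨e, he, h⟩) _ _ hconn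
  obtain ⟨z, hvz, hwz⟩ :=
    (rightUnique_specialStep hγ).join_reflTransGen_of_reflTransGen_symmGen hsymm
  exact hWi.eq_of_mem_of_mem hWj (hWi.1.descendant_mem hv (.of_reflTransGen_specialStep hvz))
    (hWj.1.descendant_mem hw (.of_reflTransGen_specialStep hwz))

/-- Let `(V, E, s, r)` be a finite directed graph with a specialization `γ`
(special edges being those in the image of `γ`), and let `Wᵢ, Wⱼ` be minimal hereditary
subsets of `V`. If some `v ∈ Wᵢ` and `w ∈ Wⱼ` are connected in the undirected graph
`(V, γ̃(V))` (whose edges are the special edges with directions forgotten), then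
`Wᵢ = Wⱼ`. -/
theorem minHereditary_eq_of_connected
    {V E : Type*} [Fintype V] [Fintype E]
    (s r : E → V)
    (γ : {v : V // ∃ e, s e = v} → E)
    (hγ : ∀ v, s (γ v) = v.1)
    (Wi Wj : Set V) (hWi : MinHereditary s r Wi) (hWj : MinHereditary s r Wj)
    (v w : V) (hv : v ∈ Wi) (hw : w ∈ Wj)
    (hconn : Relation.ReflTransGen
      (fun a b => ∃ e, (∃ u, γ u = e) ∧ ((s e = a ∧ r e = b) ∨ (s e = b ∧ r e = a)))
      v w) :
    Wi = Wj :=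
  minHereditary_eq_of_connected_general s r γ hγ Wi Wj hWi hWj v w hv hw hconn
end

section
/- Every finite directed graph Γ = (V, E, s, r) with V nonempty has a regular specialization; i.e., there exists a specialization γ such that (1) there are only finitely many special paths all of whose vertices lie in V ∖ (W₁ ∪ ⋯ ∪ W_k), where W₁, …, W_k is the frame of Γ, and (2) for each i with 1 ≤ i ≤ k, the undirected graph on W_i whose edges come from the special edges with source in W_i (all of which lie in E(W_i, W_i) since W_i is hereditary) is connected. -/
/-- The union `W₁ ∪ ⋯ ∪ W_k` of all minimal hereditary subsets (the frame) of the graph. -/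
def frameUnion {V E : Type*} (s r : E → V) : Set V :=
  {v | ∃ W : Set V, MinHereditary s r W ∧ v ∈ W}

/-!
Choose one vertex `c W` in every minimal hereditary set `W`. Every vertex has a descendant among
the chosen ones, so the distance `d` to them is finite, and every other vertex has an out-edge
lowering `d`; specialize it along such an edge. A special path avoiding the frame then strictly
lowers `d` and so repeats no edge, and inside a minimal hereditary `W` the special edges lead from
every vertex down to `c W`, the only chosen vertex in `W`.
-/

open Relation

section Rank

variable {α : Type*} (R : α → α → Prop) (D : Set α)

def reachesIn : ℕ → Set α
  | 0 => D
  | n + 1 => {a | a ∈ D ∨ ∃ b, R a b ∧ b ∈ reachesIn n}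

variable {R D}

theorem exists_reachesIn_of_reflTransGen {a b : α} (hab : ReflTransGen R a b) (hb : b ∈ D) :
    ∃ n, a ∈ reachesIn R D n := by
  induction hab using ReflTransGen.head_induction_on with
  | refl => exact ⟨0, hb⟩
  | head hac _ ih =>
    obtain ⟨n, hn⟩ := ih
    exact ⟨n + 1, Or.inr ⟨_, hac, hn⟩⟩

theorem exists_rank_of_forall_reaches (h : ∀ a, ∃ b ∈ D, ReflTransGen R a b) :
    ∃ d : α → ℕ, ∀ a ∉ D, ∃ b, R a b ∧ d b < d a := by
  classical
  have hreach (a : α) : ∃ n, a ∈ reachesIn R D n := by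
    obtain ⟨b, hb, hab⟩ := h a
    exact exists_reachesIn_of_reflTransGen hab hb
  refine ⟨fun a => Nat.find (hreach a), fun a ha => ?_⟩
  have hspec := Nat.find_spec (hreach a)
  cases hn : Nat.find (hreach a) with
  | zero => exact absurd (hn ▸ hspec : a ∈ reachesIn R D 0) ha
  | succ n =>
    obtain ⟨b, hab, hb⟩ := (hn ▸ hspec : a ∈ reachesIn R D (n + 1)).resolve_left ha
    refine ⟨b, hab, ?_⟩
    show Nat.find (hreach b) < Nat.find (hreach a)
    rw [hn]
    exact Nat.lt_succ_of_le (Nat.find_min' _ hb)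

theorem Relation.reflTransGen_of_exists_rank_lt {W : Set α} {c : α} (d : α → ℕ)
    (h : ∀ a ∈ W, a ≠ c → ∃ b ∈ W, R a b ∧ d b < d a) : ∀ a ∈ W, ReflTransGen R a c := by
  intro a
  induction a using (measure d).wf.induction with
  | _ a ih =>
    intro ha
    by_cases hac : a = c
    · exact hac ▸ ReflTransGen.refl
    · obtain ⟨b, hbW, hab, hba⟩ := h a ha hac
      exact ReflTransGen.head hab (ih b hba hbW)

end Rank

section Graph

variable {V E : Type*} {s r : E → V}

theorem Hereditary.descendants (s r : E → V) (v : V) :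
    Hereditary s r {w | Descendant s r v w} :=
  ⟨⟨v, ReflTransGen.refl⟩, fun _ hu _ huw => hu.trans huw⟩

theorem Hereditary.exists_minHereditary_subset [Finite V] {U : Set V} (hU : Hereditary s r U) :
    ∃ W, MinHereditary s r W ∧ W ⊆ U := by
  obtain ⟨W, ⟨hW, hWU⟩, hmin⟩ := Set.Finite.exists_minimal
    (s := {X | Hereditary s r X ∧ X ⊆ U}) (Set.toFinite _) ⟨U, hU, subset_rfl⟩
  exact ⟨W, ⟨hW, fun X hX hXW => subset_antisymm hXW (hmin ⟨hX, hXW.trans hWU⟩ hXW)⟩, hWU⟩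

theorem MinHereditary.eq_of_mem {W₁ W₂ : Set V} (h₁ : MinHereditary s r W₁)
    (h₂ : MinHereditary s r W₂) {v : V} (hv₁ : v ∈ W₁) (hv₂ : v ∈ W₂) : W₁ = W₂ := by
  have hi : Hereditary s r (W₁ ∩ W₂) :=
    ⟨⟨v, hv₁, hv₂⟩, fun u hu w huw => ⟨h₁.1.2 u hu.1 w huw, h₂.1.2 u hu.2 w huw⟩⟩
  exact (h₁.2 _ hi Set.inter_subset_left).symm.trans (h₂.2 _ hi Set.inter_subset_right)

theorem List.nodup_of_isChain_of_rank_lt {d : V → ℕ} {p : List E}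
    (hp : p.IsChain fun e f => r e = s f) (hd : ∀ e ∈ p, d (r e) < d (s e)) : p.Nodup := by
  have hlt : p.IsChain fun e f => d (s f) < d (s e) :=
    hp.imp_of_mem_imp fun e f he _ hef => by rw [← hef]; exact hd e he
  have hpw : p.Pairwise fun e f => d (s f) < d (s e) :=
    isChain_iff_pairwise.mp hlt
  exact hpw.imp fun hef => ne_of_apply_ne (fun e => d (s e)) hef.ne'

theorem exists_specialization_rank_lt {D : Set V} {d : V → ℕ}
    (hd : ∀ v ∉ D, ∃ e, s e = v ∧ d (r e) < d v) :
    ∃ γ : {u : V // ∃ e, s e = u} → E,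
      (∀ u, s (γ u) = u.1) ∧ ∀ u, u.1 ∉ D → d (r (γ u)) < d u.1 := by
  classical
  choose ε hεs hεd using hd
  refine ⟨fun u => if hu : u.1 ∈ D then u.2.choose else ε u.1 hu, fun u => ?_, fun u hu => ?_⟩
  · dsimp only
    split_ifs with hu
    exacts [u.2.choose_spec, hεs u.1 hu]
  · simpa only [dif_neg hu, hεs u.1 hu] using hεd u.1 hu

theorem exists_descendant_mem_range [Finite V] {c : {W // MinHereditary s r W} → V}
    (hc : ∀ W, c W ∈ W.1) (v : V) : ∃ w ∈ Set.range c, Descendant s r v w := by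
  obtain ⟨W, hW, hWv⟩ := (Hereditary.descendants s r v).exists_minHereditary_subset
  exact ⟨c ⟨W, hW⟩, ⟨_, rfl⟩, hWv (hc ⟨W, hW⟩)⟩

theorem MinHereditary.eq_of_mem_range {c : {W // MinHereditary s r W} → V}
    (hc : ∀ W, c W ∈ W.1) {W : Set V} (hW : MinHereditary s r W) {v : V} (hv : v ∈ W)
    (hvc : v ∈ Set.range c) : v = c ⟨W, hW⟩ := by
  obtain ⟨W', rfl⟩ := hvc
  have hW' : W' = ⟨W, hW⟩ := Subtype.ext (W'.2.eq_of_mem hW (hc W') hv)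
  rw [hW']

variable (s r) in
def specialAdj (γ : {u : V // ∃ e, s e = u} → E) (W : Set V) (x y : V) : Prop :=
  ∃ e, (∃ u, γ u = e) ∧ s e ∈ W ∧ ((s e = x ∧ r e = y) ∨ (s e = y ∧ r e = x))

instance {γ : {u : V // ∃ e, s e = u} → E} {W : Set V} : Std.Symm (specialAdj s r γ W) where
  symm _ _ := fun ⟨e, he, heW, hxy⟩ => ⟨e, he, heW, hxy.symm⟩

theorem MinHereditary.reflTransGen_specialAdj {W : Set V} (hW : MinHereditary s r W)
    {γ : {u : V // ∃ e, s e = u} → E} (hγs : ∀ u, s (γ u) = u.1) {D : Set V} {d : V → ℕ}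
    (hd : ∀ v ∉ D, ∃ e, s e = v ∧ d (r e) < d v) (hγd : ∀ u, u.1 ∉ D → d (r (γ u)) < d u.1)
    {c : V} (hWD : ∀ v ∈ W, v ∈ D → v = c) :
    ∀ a ∈ W, ReflTransGen (specialAdj s r γ W) a c := by
  refine reflTransGen_of_exists_rank_lt d fun a ha hac => ?_
  have haD : a ∉ D := fun h => hac (hWD a ha h)
  obtain ⟨e, he, -⟩ := hd a haD
  set u : {u : V // ∃ e, s e = u} := ⟨a, e, he⟩
  have hstep : Descendant s r a (r (γ u)) := ReflTransGen.single ⟨γ u, hγs u, rfl⟩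
  refine ⟨r (γ u), hW.1.2 a ha _ hstep, ⟨γ u, ⟨u, rfl⟩, ?_, Or.inl ⟨hγs u, rfl⟩⟩, hγd u haD⟩
  exact (hγs u).symm ▸ ha

end Graph

theorem exists_regular_specialization_general
    {V E : Type*} [Fintype V] [Fintype E]
    (s r : E → V) :
    ∃ γ : {u : V // ∃ e, s e = u} → E,
      (∀ u, s (γ u) = u.1) ∧
      {p : List E | p ≠ [] ∧ p.Chain' (fun e f => r e = s f) ∧
          (∀ e ∈ p, ∃ u, γ u = e) ∧
          (∀ e ∈ p, s e ∉ frameUnion s r) ∧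
          ∀ h : p ≠ [], r (p.getLast h) ∉ frameUnion s r}.Finite ∧
      ∀ W : Set V, MinHereditary s r W → ∀ a ∈ W, ∀ b ∈ W,
        Relation.ReflTransGen
          (fun x y => ∃ e, (∃ u, γ u = e) ∧ s e ∈ W ∧
            ((s e = x ∧ r e = y) ∨ (s e = y ∧ r e = x)))
          a b := by
  choose c hc using fun W : {W : Set V // MinHereditary s r W} => W.2.1.1
  obtain ⟨d, hd⟩ := exists_rank_of_forall_reaches (exists_descendant_mem_range (r := r) hc)
  replace hd : ∀ v ∉ Set.range c, ∃ e, s e = v ∧ d (r e) < d v := fun v hv =>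
    let ⟨_, ⟨e, hs, hr⟩, hlt⟩ := hd v hv
    ⟨e, hs, hr ▸ hlt⟩
  obtain ⟨γ, hγs, hγd⟩ := exists_specialization_rank_lt hd
  have hframe : Set.range c ⊆ frameUnion s r := fun _ ⟨W, hW⟩ => ⟨W.1, W.2, hW ▸ hc W⟩
  refine ⟨γ, hγs, ?_, fun W hW a ha b hb => ?_⟩
  · refine (List.finite_length_le E (Fintype.card E)).subset fun p ⟨_, hchain, hsp, hout, _⟩ => ?_
    refine (List.nodup_of_isChain_of_rank_lt (d := d) hchain fun e he => ?_).length_le_card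
    obtain ⟨u, rfl⟩ := hsp e he
    rw [hγs]
    exact hγd u fun h => hout _ he (hγs u ▸ hframe h)
  · have hconn := hW.reflTransGen_specialAdj hγs hd hγd fun v hv => hW.eq_of_mem_range hc hv
    exact (hconn a ha).trans (symm (hconn b hb))

/-- Every finite directed graph `(V, E, s, r)` with `V` nonempty has a
regular specialization: there is a specialization `γ` (a map from non-sink vertices
to edges with `s (γ v) = v`; special edges are those in the image of `γ`) such that
(1) there are only finitely many special paths all of whose vertices (the sources of all
their edges and the range of the last edge) lie outside `W₁ ∪ ⋯ ∪ W_k`, where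
`W₁, …, W_k` is the frame of the graph (the minimal hereditary subsets), and
(2) for each minimal hereditary subset `Wᵢ`, the undirected graph on `Wᵢ` whose edges
come from the special edges with source in `Wᵢ` is connected. -/
theorem exists_regular_specialization
    {V E : Type*} [Fintype V] [Fintype E] [Nonempty V]
    (s r : E → V) :
    ∃ γ : {u : V // ∃ e, s e = u} → E,
      (∀ u, s (γ u) = u.1) ∧
      {p : List E | p ≠ [] ∧ p.Chain' (fun e f => r e = s f) ∧
          (∀ e ∈ p, ∃ u, γ u = e) ∧
          (∀ e ∈ p, s e ∉ frameUnion s r) ∧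
          ∀ h : p ≠ [], r (p.getLast h) ∉ frameUnion s r}.Finite ∧
      ∀ W : Set V, MinHereditary s r W → ∀ a ∈ W, ∀ b ∈ W,
        Relation.ReflTransGen
          (fun x y => ∃ e, (∃ u, γ u = e) ∧ s e ∈ W ∧
            ((s e = x ∧ r e = y) ∨ (s e = y ∧ r e = x)))
          a b :=
  exists_regular_specialization_general s r
end
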